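/- arXiv:2205.13395 — 4 statements merged into one kernel-verified Lean document; each statement's English description precedes it below -/
import Mathlib

section
/- Let (Z,r) be a compact metric space and let U_1,…,U_ℓ be a finite open cover of Z with Lebesgue number L > 0 (i.e., for every z ∈ Z there exists k with max over j of dist(z, Z \ U_j) ≥ L, equivalently the ball B(z,L) is contained in some U_k) and multiplicity m (i.e., at most m of the sets U_k contain any given point). Define h_k(x) = dist(x, Z \ U_k) and F_k = h_k / Σ_j h_j. Then each F_k is Lipschitz with Lipschitz constant at most (2m+1)/L. -/
open Metric Finset Classical

open scoped NNReal

/-!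
Each `h_k` is `1`-Lipschitz, and the sum `S = Σ_j h_j` is `2m`-Lipschitz because at any two
points `x, y` at most `2m` of the `h_j` are nonzero at `x` or `y`. The Lebesgue number gives
`S ≥ L`, and since `0 ≤ h_k ≤ S` the quotient `h_k / S` is then `(1 + 2m)/L`-Lipschitz.
-/

theorem abs_div_sub_div_le {a b c d L : ℝ} (hL : 0 < L) (hLc : L ≤ c) (hd : 0 < d)
    (hb : 0 ≤ b) (hbd : b ≤ d) : |a / c - b / d| ≤ (|a - b| + |c - d|) / L := by
  have hc : 0 < c := hL.trans_le hLc
  have hbd' : |b / d| ≤ 1 := by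
    rw [abs_of_nonneg (div_nonneg hb hd.le)]
    exact (div_le_one hd).mpr hbd
  have key : a / c - b / d = ((a - b) - b / d * (c - d)) / c := by
    field_simp
    ring
  calc |a / c - b / d| = |(a - b) - b / d * (c - d)| / c := by
        rw [key, abs_div, abs_of_pos hc]
    _ ≤ (|a - b| + |c - d|) / c := by
        gcongr
        calc |(a - b) - b / d * (c - d)| ≤ |a - b| + |b / d| * |c - d| := by
              rw [← abs_mul]; exact abs_sub _ _
          _ ≤ |a - b| + |c - d| := by
              gcongr
              exact mul_le_of_le_one_left (abs_nonneg _) hbd'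
    _ ≤ (|a - b| + |c - d|) / L := by gcongr

theorem dist_div_le_of_lipschitzWith {X : Type*} [PseudoMetricSpace X] {f g : X → ℝ}
    {a b : ℝ≥0} {L : ℝ} (hf : LipschitzWith a f) (hg : LipschitzWith b g) (hL : 0 < L)
    (hLg : ∀ x, L ≤ g x) (hf0 : ∀ x, 0 ≤ f x) (hfg : ∀ x, f x ≤ g x) (x y : X) :
    dist (f x / g x) (f y / g y) ≤ (a + b) / L * dist x y := by
  calc dist (f x / g x) (f y / g y) ≤ (dist (f x) (f y) + dist (g x) (g y)) / L :=
        abs_div_sub_div_le hL (hLg x) (hL.trans_le (hLg y)) (hf0 y) (hfg y)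
    _ ≤ (a * dist x y + b * dist x y) / L := by
        gcongr
        exacts [hf.dist_le_mul x y, hg.dist_le_mul x y]
    _ = (a + b) / L * dist x y := by ring

-- Only the at most `2m` indices with `f j x ≠ 0` or `f j y ≠ 0` contribute to the difference.
theorem lipschitzWith_sum_of_card_ne_zero_le {X ι : Type*} [PseudoMetricSpace X]
    [Fintype ι] {f : ι → X → ℝ} {K : ℝ≥0} {m : ℕ} (hf : ∀ j, LipschitzWith K (f j))
    (hmult : ∀ x, #{j | f j x ≠ 0} ≤ m) :
    LipschitzWith (2 * m * K) (fun x => ∑ j, f j x) := by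
  refine LipschitzWith.of_dist_le_mul fun x y => ?_
  set T : Finset ι := ({j | f j x ≠ 0} : Finset ι) ∪ ({j | f j y ≠ 0} : Finset ι)
  have hT : ∑ j, f j x - ∑ j, f j y = ∑ j ∈ T, (f j x - f j y) := by
    rw [← sum_sub_distrib]
    refine (sum_subset (subset_univ T) fun j _ hj => ?_).symm
    simp only [T, mem_union, mem_filter, mem_univ, true_and, not_or, not_not] at hj
    rw [hj.1, hj.2, sub_zero]
  have hcard : (#T : ℝ) ≤ 2 * m := by
    have : #T ≤ m + m := (card_union_le _ _).trans (add_le_add (hmult x) (hmult y))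
    rw [two_mul]
    exact_mod_cast this
  calc dist (∑ j, f j x) (∑ j, f j y) = |∑ j ∈ T, (f j x - f j y)| := by
        rw [Real.dist_eq, hT]
    _ ≤ ∑ j ∈ T, dist (f j x) (f j y) := abs_sum_le_sum_abs _ _
    _ ≤ ∑ _j ∈ T, K * dist x y := sum_le_sum fun j _ => (hf j).dist_le_mul x y
    _ = #T * (K * dist x y) := by rw [sum_const, nsmul_eq_mul]
    _ ≤ 2 * m * (K * dist x y) := by gcongr
    _ = ((2 * m * K : ℝ≥0) : ℝ) * dist x y := by push_cast; ring

theorem stmt2_general (Z : Type*) [MetricSpace Z]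
    (ℓ : ℕ) (U : Fin ℓ → Set Z)
    (L : ℝ) (hL : 0 < L)
    (hLeb : ∀ z : Z, ∃ k, L ≤ Metric.infDist z (U k)ᶜ)
    (m : ℕ) (hmult : ∀ z : Z, ({k | z ∈ U k} : Finset (Fin ℓ)).card ≤ m) :
    let h : Fin ℓ → Z → ℝ := fun k x => Metric.infDist x (U k)ᶜ
    let F : Fin ℓ → Z → ℝ := fun k x => h k x / ∑ j, h j x
    ∀ k, ∀ x y : Z, |F k x - F k y| ≤ ((2 * m + 1 : ℝ) / L) * dist x y := by
  intro h F k x y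
  have hh : ∀ j, LipschitzWith 1 (h j) := fun j => lipschitz_infDist_pt _
  have h_le_sum : ∀ j z, h j z ≤ ∑ i, h i z := fun j z =>
    single_le_sum (f := fun i => h i z) (fun i _ => infDist_nonneg) (mem_univ j)
  have hsum : LipschitzWith (2 * m * 1) (fun z => ∑ j, h j z) := by
    refine lipschitzWith_sum_of_card_ne_zero_le hh fun z => (card_le_card ?_).trans (hmult z)
    intro j
    simp only [mem_filter, mem_univ, true_and]
    exact fun hj => by_contra fun hz => hj (infDist_zero_of_mem hz)
  have hLsum : ∀ z, L ≤ ∑ j, h j z := fun z =>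
    (hLeb z).elim fun j hj => hj.trans (h_le_sum j z)
  have := dist_div_le_of_lipschitzWith (hh k) hsum hL hLsum (fun z => infDist_nonneg)
    (h_le_sum k) x y
  rw [Real.dist_eq] at this
  convert this using 2
  push_cast
  ring

/-- Let `U_1, …, U_ℓ` be a finite open cover of a compact metric space `Z`
with Lebesgue number `L > 0` (for every `z` there is `k` with `dist(z, Z \ U_k) ≥ L`) and
multiplicity `m` (at most `m` of the sets contain any given point).  With
`h_k(x) = dist(x, Z \ U_k)` and `F_k = h_k / Σ_j h_j`, each `F_k` is Lipschitz with
constant at most `(2m+1)/L`. -/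
theorem stmt2 (Z : Type*) [MetricSpace Z] [CompactSpace Z]
    (ℓ : ℕ) (U : Fin ℓ → Set Z)
    (hopen : ∀ k, IsOpen (U k)) (hcover : (⋃ k, U k) = Set.univ)
    (L : ℝ) (hL : 0 < L)
    (hLeb : ∀ z : Z, ∃ k, L ≤ Metric.infDist z (U k)ᶜ)
    (m : ℕ) (hmult : ∀ z : Z, ({k | z ∈ U k} : Finset (Fin ℓ)).card ≤ m) :
    let h : Fin ℓ → Z → ℝ := fun k x => Metric.infDist x (U k)ᶜ
    let F : Fin ℓ → Z → ℝ := fun k x => h k x / ∑ j, h j x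
    ∀ k, ∀ x y : Z, |F k x - F k y| ≤ ((2 * m + 1 : ℝ) / L) * dist x y :=
  stmt2_general Z ℓ U L hL hLeb m hmult
end

section
/- Let H be a Hilbert space with orthonormal basis (δ_y)_{y ∈ Y} indexed by a set Y. Suppose given finitely many functions f_1,…,f_ℓ : Y → [0,1] with Σ_k f_k(y)² = 1 for all y, and injective maps σ_k, τ_k defined on {y : f_k(y) > 0} into Y such that the assignment y ↦ (σ_k(y), τ_k(y)) for different k with f_k(y) > 0 gives pairwise distinct pairs, and such that the pair (σ_k(y), τ_k(y)) determines y and k uniquely (i.e., if f_k(y) > 0, f_{k'}(y') > 0 and (σ_k(y), τ_k(y)) = (σ_{k'}(y'), τ_{k'}(y'))) then k = k' and y = y'). Then the linear operator ι : H → H ⊗ H defined on basis vectors by ι(δ_y) = Σ_k f_k(y) δ_{σ_k(y)} ⊗ δ_{τ_k(y)} is an isometry. -/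
/-!
The vectors `ι δ_y` form an orthonormal family in `ℓ²(Y × Y)`: the injectivity hypothesis says
that distinct pairs `(k, y)` with nonzero coefficient hit distinct basis vectors, so all cross
terms of `⟪ι δ_y, ι δ_y'⟫` vanish and the diagonal ones sum to `Σ_k f_k(y)² = 1`. An orthonormal
family indexed by `Y` is the image of the standard basis under an isometry of `ℓ²(Y)`.
-/

theorem lp.orthonormal_single (𝕜 ι : Type*) [RCLike 𝕜] [DecidableEq ι] :
    Orthonormal 𝕜 fun i : ι => (lp.single 2 i 1 : lp (fun _ : ι => 𝕜) 2) := by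
  rw [orthonormal_iff_ite]
  intro i j
  rw [lp.inner_single_left, lp.single_apply]
  split_ifs with h <;> simp [h]

theorem Orthonormal.exists_linearIsometry_lp_single {𝕜 E ι : Type*} [RCLike 𝕜]
    [NormedAddCommGroup E] [InnerProductSpace 𝕜 E] [CompleteSpace E] [DecidableEq ι]
    {v : ι → E} (hv : Orthonormal 𝕜 v) :
    ∃ L : lp (fun _ : ι => 𝕜) 2 →ₗᵢ[𝕜] E, ∀ i, L (lp.single 2 i 1) = v i :=
  ⟨hv.orthogonalFamily.linearIsometry, fun i => by simp⟩

section CombinationsOfOrthonormal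

variable {𝕜 E I J K : Type*} [RCLike 𝕜] [NormedAddCommGroup E] [InnerProductSpace 𝕜 E]
  {e : J → E} {c : K → I → 𝕜} {p : K → I → J}

theorem Orthonormal.inner_smul_smul_eq_ite (he : Orthonormal 𝕜 e)
    (hp : ∀ k k' i i', c k i ≠ 0 → c k' i' ≠ 0 → p k i = p k' i' → k = k' ∧ i = i')
    [DecidableEq K] [DecidableEq I] (k k' : K) (i i' : I) :
    inner 𝕜 (c k i • e (p k i)) (c k' i' • e (p k' i')) =
      if k = k' ∧ i = i' then (‖c k i‖ : 𝕜) ^ 2 else 0 := by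
  rw [inner_smul_left, inner_smul_right]
  by_cases hc : c k i = 0
  · split_ifs <;> simp [hc]
  by_cases hc' : c k' i' = 0
  · split_ifs with h
    · obtain ⟨rfl, rfl⟩ := h
      exact absurd hc' hc
    · simp [hc']
  by_cases hpp : p k i = p k' i'
  · obtain ⟨rfl, rfl⟩ := hp k k' i i' hc hc' hpp
    rw [if_pos ⟨rfl, rfl⟩, inner_self_eq_norm_sq_to_K, he.1, ← mul_assoc, RCLike.conj_mul]
    simp
  · rw [he.inner_eq_zero hpp, if_neg (by rintro ⟨rfl, rfl⟩; exact hpp rfl)]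
    simp

theorem Orthonormal.sum_smul_comp [Fintype K] (he : Orthonormal 𝕜 e)
    (hc : ∀ i, ∑ k, ‖c k i‖ ^ 2 = 1)
    (hp : ∀ k k' i i', c k i ≠ 0 → c k' i' ≠ 0 → p k i = p k' i' → k = k' ∧ i = i') :
    Orthonormal 𝕜 fun i => ∑ k, c k i • e (p k i) := by
  classical
  rw [orthonormal_iff_ite]
  intro i i'
  rw [sum_inner]
  simp only [inner_sum, he.inner_smul_smul_eq_ite hp]
  by_cases hi : i = i'
  · subst hi
    simp only [and_true, Finset.sum_ite_eq, Finset.mem_univ, if_true]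
    exact_mod_cast hc i
  · simp [hi]

end CombinationsOfOrthonormal

/-- Let `H = ℓ²(Y)` with orthonormal basis `(δ_y)`.  Given functions
`f_1, …, f_ℓ : Y → [0,1]` with `Σ_k f_k(y)² = 1`, and maps `σ_k, τ_k` (relevant only where
`f_k > 0`) such that the pair `(σ_k(y), τ_k(y))` determines `y` and `k` uniquely among
points where the corresponding coefficient is positive, the linear operator
`ι(δ_y) = Σ_k f_k(y) δ_{σ_k(y)} ⊗ δ_{τ_k(y)}` from `ℓ²(Y)` to `ℓ²(Y) ⊗ ℓ²(Y) ≅ ℓ²(Y × Y)`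
is an isometry. -/
theorem stmt7 (Y : Type*) [DecidableEq Y] (ℓ : ℕ)
    (f : Fin ℓ → Y → ℝ) (hf01 : ∀ k y, f k y ∈ Set.Icc (0 : ℝ) 1)
    (hsum : ∀ y, ∑ k, (f k y) ^ 2 = 1)
    (σ τ : Fin ℓ → Y → Y)
    (hinj : ∀ k k' y y', 0 < f k y → 0 < f k' y' →
      (σ k y, τ k y) = (σ k' y', τ k' y') → k = k' ∧ y = y') :
    ∃ ι : lp (fun _ : Y => ℂ) 2 →ₗᵢ[ℂ] lp (fun _ : Y × Y => ℂ) 2,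
      ∀ y : Y, ι (lp.single 2 y 1) =
        ∑ k : Fin ℓ, (f k y : ℂ) • lp.single 2 (σ k y, τ k y) 1 := by
  have hpos : ∀ k y, (f k y : ℂ) ≠ 0 → 0 < f k y := fun k y h =>
    (hf01 k y).1.lt_of_ne' (by exact_mod_cast h)
  have hnorm : ∀ y, ∑ k, ‖(f k y : ℂ)‖ ^ 2 = 1 := by
    simpa only [Complex.norm_real, Real.norm_eq_abs, sq_abs] using hsum
  refine Orthonormal.exists_linearIsometry_lp_single ?_
  exact (lp.orthonormal_single ℂ (Y × Y)).sum_smul_comp hnorm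
    fun k k' y y' hk hk' => hinj k k' y y' (hpos k y hk) (hpos k' y' hk')
end

section
/- Let H, H' be Hilbert spaces and for each n ∈ ℕ let W_n = c_n^{-1} Σ_{m=n}^{2n} θ_m where the θ_m : H → H' are bounded operators satisfying θ_m*θ_m = (2m+1)·1 and θ_m*θ_{m'} = 0 for m ≠ m', and c_n = ((n+1)(3n+1))^{1/2}. Then each W_n is an isometry, and for every fixed j ≥ 0, W_{n+j}* W_n = a_{n,j}·1 where a_{n,j} = (n+1−j)(3n+1+j) / ((n+1+j)(3n+1+3j)(n+1)(3n+1))^{1/2} for n ≥ j; consequently ‖W_{n+j} − W_n‖ = (2 − 2a_{n,j})^{1/2}, and lim_{n→∞} ‖W_{n+j} − W_n‖ = 0. -/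
/-!
Because the `θ m` have orthogonal ranges,
`⟪W_p x, W_q y⟫ = (c_p c_q)⁻¹ (∑_{m ∈ [p, 2p] ∩ [q, 2q]} (2m + 1)) ⟪x, y⟫`, and the odd numbers
`2m + 1` for `p ≤ m ≤ q` add up to `(q + 1)² - p²`. For `p = q = n` this is `c_n²`, and for the
overlap `[n + j, 2n]` it is the numerator `(n + 1 - j)(3n + 1 + j)` of `a_{n,j}`. Hence
`‖(W_{n+j} - W_n) x‖² = (2 - 2 a_{n,j}) ‖x‖²`, and `1 - a_{n,j} ≤ 8j / (n + 1)` follows from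
`c_{n+j} c_n ≤ c_{n+j}²`.
-/

open Finset Filter Topology

section

variable {𝕜 E F ι : Type*} [RCLike 𝕜] [NormedAddCommGroup E] [InnerProductSpace 𝕜 E]
  [NormedAddCommGroup F] [InnerProductSpace 𝕜 F]

theorem inner_sum_apply_sum_apply_of_orthogonal [DecidableEq ι] {θ : ι → E →L[𝕜] F}
    {w : ι → ℝ} (hθ : ∀ i x y, inner 𝕜 (θ i x) (θ i y) = (w i : 𝕜) * inner 𝕜 x y)
    (horth : ∀ i i', i ≠ i' → ∀ x y, inner 𝕜 (θ i x) (θ i' y) = 0) (s t : Finset ι) (x y : E) :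
    inner 𝕜 (∑ i ∈ s, θ i x) (∑ i ∈ t, θ i y) = ((∑ i ∈ s ∩ t, w i : ℝ) : 𝕜) * inner 𝕜 x y := by
  have hdiag : ∀ i ∈ s, inner 𝕜 (θ i x) (∑ i' ∈ t, θ i' y) =
      if i ∈ t then (w i : 𝕜) * inner 𝕜 x y else 0 := by
    intro i _
    rw [inner_sum]
    split_ifs with hi
    · rw [sum_eq_single_of_mem i hi fun i' _ hne => horth i i' hne.symm x y, hθ]
    · exact sum_eq_zero fun i' hi' => horth i i' (ne_of_mem_of_not_mem hi' hi).symm x y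
  rw [sum_inner, sum_congr rfl hdiag, sum_ite_mem, ← sum_mul, RCLike.ofReal_sum]

theorem norm_sub_sq_of_inner_eq {V W : E → F} {a : ℝ} {x : E} (hV : ‖V x‖ = ‖x‖)
    (hW : ‖W x‖ = ‖x‖) (h : inner 𝕜 (V x) (W x) = (a : 𝕜) * inner 𝕜 x x) :
    ‖V x - W x‖ ^ 2 = (2 - 2 * a) * ‖x‖ ^ 2 := by
  rw [@norm_sub_sq 𝕜, h, hV, hW, inner_self_eq_norm_sq_to_K, ← RCLike.ofReal_pow,
    ← RCLike.ofReal_mul, RCLike.ofReal_re]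
  ring

theorem ContinuousLinearMap.norm_eq_sqrt_of_norm_apply_sq [Nontrivial E] {T : E →L[𝕜] F} {r : ℝ}
    (h : ∀ x, ‖T x‖ ^ 2 = r * ‖x‖ ^ 2) : ‖T‖ = √r :=
  T.homothety_norm fun x => by
    rw [← Real.sqrt_sq (norm_nonneg (T x)), h, Real.sqrt_mul' _ (sq_nonneg _),
      Real.sqrt_sq (norm_nonneg x)]

end

theorem sum_Icc_two_mul_add_one {p q : ℕ} (h : p ≤ q + 1) :
    ∑ m ∈ Icc p q, (2 * (m : ℝ) + 1) = ((q : ℝ) + 1) ^ 2 - (p : ℝ) ^ 2 := by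
  have := sum_Ico_sub (fun m : ℕ => (m : ℝ) ^ 2) h
  push_cast at this
  rw [← Ico_add_one_right_eq_Icc, ← this]
  exact sum_congr rfl fun m _ => by ring

noncomputable def normConst (n : ℕ) : ℝ := √(((n : ℝ) + 1) * (3 * n + 1))

noncomputable def overlapCoeff (n j : ℕ) : ℝ :=
  (((n : ℝ) + 1 - j) * (3 * n + 1 + j)) /
    √(((n : ℝ) + 1 + j) * (3 * n + 1 + 3 * j) * (n + 1) * (3 * n + 1))

theorem normConst_pos (n : ℕ) : 0 < normConst n := Real.sqrt_pos.mpr (by positivity)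

theorem sq_normConst (n : ℕ) : normConst n ^ 2 = ((n : ℝ) + 1) * (3 * n + 1) :=
  Real.sq_sqrt (by positivity)

theorem overlapCoeff_eq (n j : ℕ) :
    overlapCoeff n j = ((((2 * n : ℕ) : ℝ) + 1) ^ 2 - ((n + j : ℕ) : ℝ) ^ 2) /
      (normConst (n + j) * normConst n) := by
  rw [overlapCoeff, normConst, normConst, ← Real.sqrt_mul (by positivity)]
  push_cast
  ring_nf

theorem overlapCoeff_zero (n : ℕ) : overlapCoeff n 0 = 1 := by
  rw [overlapCoeff_eq, add_zero, div_eq_one_iff_eq (by positivity [normConst_pos n]),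
    ← sq, sq_normConst]
  push_cast
  ring

theorem one_sub_overlapCoeff_le {n j : ℕ} (hj : j ≤ n) :
    1 - overlapCoeff n j ≤ 8 * j / (n + 1) := by
  have hjn : (j : ℝ) ≤ n := by exact_mod_cast hj
  have hj0 : (0 : ℝ) ≤ j := j.cast_nonneg
  set P : ℝ := ((n : ℝ) + 1 + j) * (3 * n + 1 + 3 * j) with hP_def
  set N : ℝ := ((n : ℝ) + 1 - j) * (3 * n + 1 + j)
  have hP : 0 < P := by positivity
  have hN : 0 ≤ N := mul_nonneg (by linarith) (by positivity)
  have hsqrt : √(P * ((n + 1) * (3 * n + 1))) ≤ P := by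
    refine Real.sqrt_le_iff.mpr ⟨hP.le, ?_⟩
    rw [sq]
    exact mul_le_mul_of_nonneg_left (by rw [hP_def]; nlinarith) hP.le
  have hlower : N / P ≤ overlapCoeff n j := by
    rw [overlapCoeff, show ((n : ℝ) + 1 + j) * (3 * n + 1 + 3 * j) * (n + 1) * (3 * n + 1) =
      P * ((n + 1) * (3 * n + 1)) by ring]
    exact div_le_div_of_nonneg_left hN (by positivity) hsqrt
  have hgap : (P - N) * (n + 1) ≤ 8 * j * P :=
    calc (P - N) * (n + 1) = 2 * j * (4 * n + 2 + 2 * j) * (n + 1) := by ring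
      _ ≤ 2 * j * (4 * (n + 1 + j)) * (3 * n + 1 + 3 * j) := by
        gcongr (2 * j * ?_) * ?_ <;> linarith
      _ = 8 * j * P := by ring
  have : 1 - 8 * j / (n + 1) ≤ N / P := by
    rw [sub_le_comm, one_sub_div hP.ne', div_le_div_iff₀ hP (by positivity)]
    exact hgap
  linarith

section NormalizedBlock

variable {H H' : Type*} [NormedAddCommGroup H] [InnerProductSpace ℂ H]
  [NormedAddCommGroup H'] [InnerProductSpace ℂ H']

noncomputable def normalizedBlock (θ : ℕ → H →L[ℂ] H') (n : ℕ) : H →L[ℂ] H' :=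
  (((normConst n)⁻¹ : ℝ) : ℂ) • ∑ m ∈ Icc n (2 * n), θ m

variable {θ : ℕ → H →L[ℂ] H'}
  (hscaled : ∀ m, ∀ x y : H,
    (inner ℂ (θ m x) (θ m y) : ℂ) = ((2 * m + 1 : ℝ) : ℂ) * inner ℂ x y)
  (horth : ∀ m m', m ≠ m' → ∀ x y : H, inner ℂ (θ m x) (θ m' y) = (0 : ℂ))
include hscaled horth

theorem inner_normalizedBlock_apply (p q : ℕ) (x y : H) :
    inner ℂ (normalizedBlock θ p x) (normalizedBlock θ q y) =
      (((normConst p)⁻¹ * (normConst q)⁻¹ *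
        ∑ m ∈ Icc p (2 * p) ∩ Icc q (2 * q), (2 * (m : ℝ) + 1) : ℝ) : ℂ) * inner ℂ x y := by
  simp only [normalizedBlock, smul_apply, _root_.sum_apply, inner_smul_left,
    inner_smul_right,
    inner_sum_apply_sum_apply_of_orthogonal (w := fun m : ℕ => 2 * (m : ℝ) + 1) hscaled horth,
    RCLike.ofReal_eq_complex_ofReal, Complex.conj_ofReal, Complex.ofReal_mul]
  ring

theorem inner_normalizedBlock_add_apply {n j : ℕ} (hj : j ≤ n) (x y : H) :
    inner ℂ (normalizedBlock θ (n + j) x) (normalizedBlock θ n y) =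
      (overlapCoeff n j : ℂ) * inner ℂ x y := by
  have hinter : Icc (n + j) (2 * (n + j)) ∩ Icc n (2 * n) = Icc (n + j) (2 * n) := by
    ext m; simp only [mem_inter, mem_Icc]; omega
  rw [inner_normalizedBlock_apply hscaled horth, hinter, sum_Icc_two_mul_add_one (by omega),
    overlapCoeff_eq, ← mul_inv, inv_mul_eq_div]

theorem norm_normalizedBlock_apply (n : ℕ) (x : H) : ‖normalizedBlock θ n x‖ = ‖x‖ := by
  have h := inner_normalizedBlock_add_apply hscaled horth (Nat.zero_le n) x x
  rw [add_zero, overlapCoeff_zero, Complex.ofReal_one, one_mul, inner_self_eq_norm_sq_to_K,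
    inner_self_eq_norm_sq_to_K] at h
  exact (pow_left_inj₀ (norm_nonneg _) (norm_nonneg _) two_ne_zero).mp (by exact_mod_cast h)

theorem norm_normalizedBlock_add_sub [Nontrivial H] {n j : ℕ} (hj : j ≤ n) :
    ‖normalizedBlock θ (n + j) - normalizedBlock θ n‖ = √(2 - 2 * overlapCoeff n j) :=
  ContinuousLinearMap.norm_eq_sqrt_of_norm_apply_sq fun x =>
    norm_sub_sq_of_inner_eq (norm_normalizedBlock_apply hscaled horth _ x)
      (norm_normalizedBlock_apply hscaled horth _ x)
      (inner_normalizedBlock_add_apply hscaled horth hj x x)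

theorem tendsto_norm_normalizedBlock_add_sub [Nontrivial H] (j : ℕ) :
    Tendsto (fun n => ‖normalizedBlock θ (n + j) - normalizedBlock θ n‖) atTop (𝓝 0) := by
  have hbound : Tendsto (fun n : ℕ => √(16 * j * (1 / ((n : ℝ) + 1)))) atTop (𝓝 0) := by
    simpa using (tendsto_one_div_add_atTop_nhds_zero_nat.const_mul (16 * (j : ℝ))).sqrt
  refine tendsto_of_tendsto_of_tendsto_of_le_of_le' tendsto_const_nhds hbound
    (Eventually.of_forall fun n => norm_nonneg _) ?_
  filter_upwards [eventually_ge_atTop j] with n hn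
  rw [norm_normalizedBlock_add_sub hscaled horth hn]
  refine Real.sqrt_le_sqrt ?_
  linarith [one_sub_overlapCoeff_le hn, mul_one_div (8 * (j : ℝ)) ((n : ℝ) + 1)]

end NormalizedBlock

theorem stmt9_general (H H' : Type*)
    [NormedAddCommGroup H] [InnerProductSpace ℂ H]
    [NormedAddCommGroup H'] [InnerProductSpace ℂ H']
    [Nontrivial H]
    (θ : ℕ → (H →L[ℂ] H'))
    (hscaled : ∀ m, ∀ x y : H,
      (inner ℂ (θ m x) (θ m y) : ℂ) = ((2 * m + 1 : ℝ) : ℂ) * inner ℂ x y)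
    (horth : ∀ m m', m ≠ m' → ∀ x y : H, inner ℂ (θ m x) (θ m' y) = (0 : ℂ)) :
    let c : ℕ → ℝ := fun n => Real.sqrt (((n : ℝ) + 1) * (3 * n + 1))
    let W : ℕ → (H →L[ℂ] H') := fun n => (((c n)⁻¹ : ℝ) : ℂ) • ∑ m ∈ Finset.Icc n (2 * n), θ m
    let a : ℕ → ℕ → ℝ := fun n j =>
      (((n : ℝ) + 1 - j) * (3 * n + 1 + j)) /
        Real.sqrt (((n : ℝ) + 1 + j) * (3 * n + 1 + 3 * j) * (n + 1) * (3 * n + 1))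
    (∀ n, ∀ x : H, ‖W n x‖ = ‖x‖) ∧
      (∀ j n, j ≤ n → ∀ x y : H,
        (inner ℂ (W (n + j) x) (W n y) : ℂ) = ((a n j : ℝ) : ℂ) * inner ℂ x y) ∧
      (∀ j n, j ≤ n → ‖W (n + j) - W n‖ = Real.sqrt (2 - 2 * a n j)) ∧
      (∀ j : ℕ, Tendsto (fun n => ‖W (n + j) - W n‖) atTop (𝓝 0)) :=
  ⟨norm_normalizedBlock_apply hscaled horth,
    fun _ _ hj => inner_normalizedBlock_add_apply hscaled horth hj,
    fun _ _ hj => norm_normalizedBlock_add_sub hscaled horth hj,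
    tendsto_norm_normalizedBlock_add_sub hscaled horth⟩

/-- Let `θ_m : H → H'` satisfy `θ_m*θ_m = (2m+1)·1` and `θ_m*θ_{m'} = 0`
for `m ≠ m'`, and set `W_n = c_n^{-1} Σ_{m=n}^{2n} θ_m` with `c_n = ((n+1)(3n+1))^{1/2}`.
Then each `W_n` is an isometry; for `j ≥ 0` and `n ≥ j`, `W_{n+j}* W_n = a_{n,j}·1` with
`a_{n,j} = (n+1−j)(3n+1+j)/((n+1+j)(3n+1+3j)(n+1)(3n+1))^{1/2}`; consequently
`‖W_{n+j} − W_n‖ = (2 − 2a_{n,j})^{1/2}` and `‖W_{n+j} − W_n‖ → 0` as `n → ∞`. -/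
theorem stmt9 (H H' : Type*)
    [NormedAddCommGroup H] [InnerProductSpace ℂ H] [CompleteSpace H]
    [NormedAddCommGroup H'] [InnerProductSpace ℂ H'] [CompleteSpace H']
    [Nontrivial H]
    (θ : ℕ → (H →L[ℂ] H'))
    (hscaled : ∀ m, ∀ x y : H,
      (inner ℂ (θ m x) (θ m y) : ℂ) = ((2 * m + 1 : ℝ) : ℂ) * inner ℂ x y)
    (horth : ∀ m m', m ≠ m' → ∀ x y : H, inner ℂ (θ m x) (θ m' y) = (0 : ℂ)) :
    let c : ℕ → ℝ := fun n => Real.sqrt (((n : ℝ) + 1) * (3 * n + 1))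
    let W : ℕ → (H →L[ℂ] H') := fun n => (((c n)⁻¹ : ℝ) : ℂ) • ∑ m ∈ Finset.Icc n (2 * n), θ m
    let a : ℕ → ℕ → ℝ := fun n j =>
      (((n : ℝ) + 1 - j) * (3 * n + 1 + j)) /
        Real.sqrt (((n : ℝ) + 1 + j) * (3 * n + 1 + 3 * j) * (n + 1) * (3 * n + 1))
    (∀ n, ∀ x : H, ‖W n x‖ = ‖x‖) ∧
      (∀ j n, j ≤ n → ∀ x y : H,
        (inner ℂ (W (n + j) x) (W n y) : ℂ) = ((a n j : ℝ) : ℂ) * inner ℂ x y) ∧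
      (∀ j n, j ≤ n → ‖W (n + j) - W n‖ = Real.sqrt (2 - 2 * a n j)) ∧
      (∀ j : ℕ, Tendsto (fun n => ‖W (n + j) - W n‖) atTop (𝓝 0)) :=
  stmt9_general H H' θ hscaled horth
end

section
/- Let H, H' be Hilbert spaces, u a unitary on H, and v a unitary on H'. For n ∈ ℕ and r ∈ ℤ let ι_{n,r} = v^r ι_{n,0} u^{−r} where ι_{n,0} : H → H' are isometries such that the family {ι_{2m,r} : m ∈ ℕ, |r| ≤ 2m−1} has mutually orthogonal ranges. Define θ_m = Σ_{r=−m}^{m} ι_{2m,r} and W_n = c_n^{-1} Σ_{m=n}^{2n} θ_m with c_n = ((n+1)(3n+1))^{1/2}. Then for every fixed j ≥ 0 and n ≥ j, W_n* v^j W_n = ((3n+1−j)/(3n+1)) u^j, and consequently ‖v^j W_n − W_n u^j‖ = O(n^{−1/2}) as n → ∞. -/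
open Finset

/-!
Index the summands of `Σ_{m=n}^{2n} θ_m` by the trapezoid `Λ_n = {(m, r) : n ≤ m ≤ 2n, |r| ≤ m}`.
The intertwining relation `v^j ι_{2m,r} = ι_{2m,r+j} u^j` turns `v^j W_n` into the sum over the
shifted trapezoid `Λ_n + (0, j)`, precomposed with `u^j`. As the `ι_{2m,r}` are isometries with
mutually orthogonal ranges, `⟪W_n x, v^j W_n y⟫ = c_n⁻² #(Λ_n ∩ (Λ_n + (0, j))) ⟪x, u^j y⟫`, and the
intersection has `Σ_{m=n}^{2n} (2m + 1 - j) = (n + 1)(3n + 1 - j)` points. For `j = 0` this makes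
`W_n` an isometry, so `‖(v^j W_n - W_n u^j) x‖² = 2 (1 - t) ‖x‖²` with `t = (3n + 1 - j)/(3n + 1)`,
which gives the bound `√(2j / (3n + 1)) ≤ √(2j) / √n`.
-/

noncomputable def trapezoid (n : ℕ) : Finset (ℕ × ℤ) :=
  (Icc n (2 * n) ×ˢ Icc (-(2 * n : ℤ)) (2 * n)).filter fun p => -(p.1 : ℤ) ≤ p.2 ∧ p.2 ≤ p.1

theorem mem_trapezoid {n : ℕ} {p : ℕ × ℤ} :
    p ∈ trapezoid n ↔ p.1 ∈ Icc n (2 * n) ∧ p.2 ∈ Icc (-(p.1 : ℤ)) p.1 := by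
  simp only [trapezoid, mem_filter, mem_product, mem_Icc]
  omega

theorem sum_trapezoid {M : Type*} [AddCommMonoid M] (n : ℕ) (f : ℕ × ℤ → M) :
    ∑ p ∈ trapezoid n, f p = ∑ m ∈ Icc n (2 * n), ∑ r ∈ Icc (-(m : ℤ)) m, f (m, r) :=
  sum_finset_product _ _ _ fun _ => mem_trapezoid

def shiftSnd (j : ℤ) : ℕ × ℤ ↪ ℕ × ℤ :=
  ((Equiv.refl ℕ).prodCongr (Equiv.addRight j)).toEmbedding

theorem sum_Icc_two_mul_add_one_sub {n j : ℕ} (hj : j ≤ n) :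
    ∑ m ∈ Icc n (2 * n), (2 * m + 1 - j) = (n + 1) * (3 * n + 1 - j) := by
  rw [← Ico_add_one_right_eq_Icc, sum_Ico_eq_sum_range, show 2 * n + 1 - n = n + 1 by omega]
  have hgauss := sum_range_id_mul_two (n + 1)
  have hterm : ∀ k ∈ range (n + 1), 2 * (n + k) + 1 - j = (2 * n + 1 - j) + 2 * k :=
    fun k _ => by omega
  rw [sum_congr rfl hterm, sum_add_distrib, sum_const, card_range, smul_eq_mul, ← mul_sum]
  zify [hj, (by omega : j ≤ 2 * n + 1), (by omega : j ≤ 3 * n + 1)] at hgauss ⊢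
  push_cast at hgauss
  linear_combination hgauss

theorem card_trapezoid_inter_map_shiftSnd {n j : ℕ} (hj : j ≤ n) :
    #(trapezoid n ∩ (trapezoid n).map (shiftSnd j)) = (n + 1) * (3 * n + 1 - j) := by
  have hmem : ∀ p : ℕ × ℤ, p ∈ trapezoid n ∩ (trapezoid n).map (shiftSnd j) ↔
      p.1 ∈ Icc n (2 * n) ∧ p.2 ∈ Icc ((j : ℤ) - p.1) p.1 := by
    rintro ⟨m, r⟩
    simp only [shiftSnd, mem_inter, mem_trapezoid, mem_Icc, mem_map_equiv, Equiv.prodCongr_symm,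
      Equiv.refl_symm, Equiv.addRight_symm, Equiv.prodCongr_apply, Equiv.coe_refl,
      Equiv.coe_addRight, Prod.map_apply, id_eq]
    omega
  rw [card_eq_sum_ones, sum_finset_product _ _ (fun m : ℕ => Icc ((j : ℤ) - m) m) hmem,
    ← sum_Icc_two_mul_add_one_sub hj]
  refine sum_congr rfl fun m hm => ?_
  rw [← card_eq_sum_ones, Int.card_Icc]
  simp only [mem_Icc] at hm
  omega

theorem inner_sum_sum_eq_card_inter_mul {𝕜 F ι : Type*} [RCLike 𝕜] [NormedAddCommGroup F]
    [InnerProductSpace 𝕜 F] [DecidableEq ι] {f g : ι → F} {c : 𝕜}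
    (h : ∀ a b, inner 𝕜 (f a) (g b) = if a = b then c else 0) (s t : Finset ι) :
    inner 𝕜 (∑ a ∈ s, f a) (∑ b ∈ t, g b) = #(s ∩ t) * c := by
  simp [sum_inner, inner_sum, h, Finset.inter_comm]

theorem ContinuousLinearMap.norm_sub_le_sqrt_of_re_inner {𝕜 E F : Type*} [RCLike 𝕜]
    [NormedAddCommGroup E] [InnerProductSpace 𝕜 E] [NormedAddCommGroup F] [InnerProductSpace 𝕜 F]
    {A B : E →L[𝕜] F} (hA : ∀ x, ‖A x‖ = ‖x‖) (hB : ∀ x, ‖B x‖ = ‖x‖) {t : ℝ}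
    (h : ∀ x, RCLike.re (inner 𝕜 (A x) (B x)) = t * ‖x‖ ^ 2) :
    ‖A - B‖ ≤ √(2 * (1 - t)) := by
  refine opNorm_le_bound _ (Real.sqrt_nonneg _) fun x => ?_
  have hsq : ‖(A - B) x‖ ^ 2 = 2 * (1 - t) * ‖x‖ ^ 2 := by
    rw [sub_apply, norm_sub_sq (𝕜 := 𝕜), hA, hB, h]
    ring
  rw [← Real.sqrt_sq (norm_nonneg ((A - B) x)), hsq, Real.sqrt_mul' _ (sq_nonneg _),
    Real.sqrt_sq (norm_nonneg x)]

section Intertwining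

variable {H H' : Type*} [NormedAddCommGroup H] [InnerProductSpace ℂ H]
  [NormedAddCommGroup H'] [InnerProductSpace ℂ H'] {u : H ≃ₗᵢ[ℂ] H} {v : H' ≃ₗᵢ[ℂ] H'}
  {ι : ℤ → H →L[ℂ] H'}

theorem zpow_apply_of_intertwining (hrel : ∀ r x, ι r x = (v ^ r) (ι 0 ((u ^ (-r)) x)))
    (k r : ℤ) (x : H) : (v ^ k) (ι r x) = ι (r + k) ((u ^ k) x) := by
  have hu : (u ^ (-(r + k))) ((u ^ k) x) = (u ^ (-r)) x := by
    rw [← Function.comp_apply (f := u ^ (-(r + k))), ← LinearIsometryEquiv.coe_mul, ← zpow_add]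
    congr
    ring
  rw [hrel r, hrel (r + k), hu, add_comm r k, zpow_add, LinearIsometryEquiv.coe_mul]
  rfl

theorem inner_apply_apply_of_intertwining (hiso : ∀ x, ‖ι 0 x‖ = ‖x‖)
    (hrel : ∀ r x, ι r x = (v ^ r) (ι 0 ((u ^ (-r)) x))) (r : ℤ) (x y : H) :
    inner ℂ (ι r x) (ι r y) = inner ℂ x y := by
  have hnorm : ∀ z, ‖ι r z‖ = ‖z‖ := fun z => by simp [hrel r, hiso]
  exact (LinearMap.norm_map_iff_inner_map_map (ι r)).mp hnorm x y

end Intertwining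

section Theta

variable {H H' : Type*} [NormedAddCommGroup H] [InnerProductSpace ℂ H]
  [NormedAddCommGroup H'] [InnerProductSpace ℂ H'] {u : H ≃ₗᵢ[ℂ] H} {v : H' ≃ₗᵢ[ℂ] H'}
  {ι : ℕ → ℤ → H →L[ℂ] H'}

variable (ι) in
noncomputable def normalizedThetaSum (n : ℕ) : H →L[ℂ] H' :=
  (((Real.sqrt (((n : ℝ) + 1) * (3 * n + 1)))⁻¹ : ℝ) : ℂ) • ∑ p ∈ trapezoid n, ι (2 * p.1) p.2

variable (hiso : ∀ n, ∀ x : H, ‖ι n 0 x‖ = ‖x‖)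
    (hrel : ∀ n, ∀ r : ℤ, ∀ x : H, ι n r x = (v ^ r) (ι n 0 ((u ^ (-r)) x)))
    (horth : ∀ (m m' : ℕ) (r r' : ℤ), (m, r) ≠ (m', r') →
      ∀ x y : H, inner ℂ (ι (2 * m) r x) (ι (2 * m') r' y) = (0 : ℂ))
include hiso hrel horth

theorem inner_sum_trapezoid_zpow {n j : ℕ} (hj : j ≤ n) (x y : H) :
    inner ℂ (∑ p ∈ trapezoid n, ι (2 * p.1) p.2 x)
        ((v ^ (j : ℤ)) (∑ p ∈ trapezoid n, ι (2 * p.1) p.2 y)) =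
      ((n + 1) * (3 * n + 1 - j) : ℕ) * inner ℂ x ((u ^ (j : ℤ)) y) := by
  have hshift : (v ^ (j : ℤ)) (∑ p ∈ trapezoid n, ι (2 * p.1) p.2 y) =
      ∑ q ∈ (trapezoid n).map (shiftSnd j), ι (2 * q.1) q.2 ((u ^ (j : ℤ)) y) := by
    rw [map_sum, sum_map]
    exact sum_congr rfl fun p _ => zpow_apply_of_intertwining (hrel _) _ _ _
  rw [hshift, inner_sum_sum_eq_card_inter_mul, card_trapezoid_inter_map_shiftSnd hj]
  intro a b
  split_ifs with hab
  · rw [hab, inner_apply_apply_of_intertwining (hiso _) (hrel _)]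
  · exact horth _ _ _ _ hab _ _

theorem inner_normalizedThetaSum_zpow {n j : ℕ} (hj : j ≤ n) (x y : H) :
    inner ℂ (normalizedThetaSum ι n x) ((v ^ (j : ℤ)) (normalizedThetaSum ι n y)) =
      (((3 * n + 1 - j) / (3 * n + 1) : ℝ) : ℂ) * inner ℂ x ((u ^ (j : ℤ)) y) := by
  have hcoef : (Real.sqrt (((n : ℝ) + 1) * (3 * n + 1)))⁻¹ *
      (Real.sqrt (((n : ℝ) + 1) * (3 * n + 1)))⁻¹ * ((n + 1) * (3 * n + 1 - j) : ℕ) =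
        (3 * n + 1 - j) / (3 * n + 1) := by
    rw [← mul_inv, Real.mul_self_sqrt (by positivity), Nat.cast_mul, Nat.cast_sub (by omega)]
    push_cast
    field_simp
  simp only [normalizedThetaSum, smul_apply, map_smul, inner_smul_left,
    inner_smul_right, Complex.conj_ofReal, _root_.sum_apply,
    inner_sum_trapezoid_zpow hiso hrel horth hj, ← hcoef]
  push_cast
  ring

theorem norm_normalizedThetaSum_apply (n : ℕ) (x : H) : ‖normalizedThetaSum ι n x‖ = ‖x‖ := by
  refine (LinearMap.norm_map_iff_inner_map_map (normalizedThetaSum ι n)).mpr (fun x y => ?_) x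
  simpa [(by positivity : (3 * n + 1 : ℝ) ≠ 0)] using
    inner_normalizedThetaSum_zpow hiso hrel horth (Nat.zero_le n) x y

theorem norm_zpow_comp_normalizedThetaSum_sub_le {n j : ℕ} (hj : j ≤ n) :
    ‖((v ^ (j : ℤ)).toLinearIsometry.toContinuousLinearMap).comp (normalizedThetaSum ι n) -
        (normalizedThetaSum ι n).comp ((u ^ (j : ℤ)).toLinearIsometry.toContinuousLinearMap)‖ ≤
      Real.sqrt (2 * j / (3 * n + 1)) := by
  have hre : ∀ x, RCLike.re (inner ℂ ((v ^ (j : ℤ)) (normalizedThetaSum ι n x))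
      (normalizedThetaSum ι n ((u ^ (j : ℤ)) x))) = (3 * n + 1 - j) / (3 * n + 1) * ‖x‖ ^ 2 := by
    intro x
    rw [← inner_conj_symm, inner_normalizedThetaSum_zpow hiso hrel horth hj, map_mul,
      Complex.conj_ofReal, inner_conj_symm, inner_self_eq_norm_sq_to_K,
      LinearIsometryEquiv.norm_map, RCLike.re_to_complex, Complex.re_ofReal_mul]
    simp [← Complex.ofReal_pow]
  calc _ ≤ Real.sqrt (2 * (1 - (3 * n + 1 - j) / (3 * n + 1))) :=
        ContinuousLinearMap.norm_sub_le_sqrt_of_re_inner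
          (fun x => by simp [norm_normalizedThetaSum_apply hiso hrel horth])
          (fun x => by simp [norm_normalizedThetaSum_apply hiso hrel horth]) hre
    _ = Real.sqrt (2 * j / (3 * n + 1)) := by
      congr 1
      field_simp
      ring

end Theta

theorem stmt10_general (H H' : Type*)
    [NormedAddCommGroup H] [InnerProductSpace ℂ H]
    [NormedAddCommGroup H'] [InnerProductSpace ℂ H']
    (u : H ≃ₗᵢ[ℂ] H) (v : H' ≃ₗᵢ[ℂ] H')
    (ι : ℕ → ℤ → (H →L[ℂ] H'))
    (hiso : ∀ n, ∀ x : H, ‖ι n 0 x‖ = ‖x‖)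
    (hrel : ∀ n, ∀ r : ℤ, ∀ x : H, ι n r x = (v ^ r) (ι n 0 ((u ^ (-r)) x)))
    (horth : ∀ (m m' : ℕ) (r r' : ℤ), (m, r) ≠ (m', r') →
      ∀ x y : H, inner ℂ (ι (2 * m) r x) (ι (2 * m') r' y) = (0 : ℂ)) :
    let c : ℕ → ℝ := fun n => Real.sqrt (((n : ℝ) + 1) * (3 * n + 1))
    let θ : ℕ → (H →L[ℂ] H') := fun m => ∑ r ∈ Finset.Icc (-(m : ℤ)) (m : ℤ), ι (2 * m) r
    let W : ℕ → (H →L[ℂ] H') := fun n => (((c n)⁻¹ : ℝ) : ℂ) • ∑ m ∈ Finset.Icc n (2 * n), θ m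
    ∀ j : ℕ,
      (∀ n, j ≤ n → ∀ x y : H,
        (inner ℂ (W n x) ((v ^ (j : ℤ)) (W n y)) : ℂ) =
          (((3 * (n : ℝ) + 1 - j) / (3 * (n : ℝ) + 1) : ℝ) : ℂ) *
            inner ℂ x ((u ^ (j : ℤ)) y)) ∧
      ∃ C : ℝ, ∀ n : ℕ, j ≤ n →
        ‖((v ^ (j : ℤ)).toLinearIsometry.toContinuousLinearMap).comp (W n) -
            (W n).comp ((u ^ (j : ℤ)).toLinearIsometry.toContinuousLinearMap)‖ ≤
          C / Real.sqrt n := by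
  intro c θ W j
  have hW : W = normalizedThetaSum ι := funext fun n => by
    simp only [W, θ, c, normalizedThetaSum, sum_trapezoid]
  rw [hW]
  refine ⟨fun n hj => inner_normalizedThetaSum_zpow hiso hrel horth hj, Real.sqrt (2 * j),
    fun n hj => (norm_zpow_comp_normalizedThetaSum_sub_le hiso hrel horth hj).trans ?_⟩
  rw [← Real.sqrt_div' _ (Nat.cast_nonneg n)]
  refine Real.sqrt_le_sqrt ?_
  rcases n.eq_zero_or_pos with rfl | hn
  · simp [Nat.le_zero.mp hj]
  · exact div_le_div_of_nonneg_left (by positivity) (by positivity) (by linarith)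

/-- With unitaries `u` of `H` and `v` of `H'`, isometries
`ι_{n,r} = v^r ι_{n,0} u^{−r} : H → H'` such that the family `{ι_{2m,r}}` has mutually
orthogonal ranges, `θ_m = Σ_{r=−m}^m ι_{2m,r}` and `W_n = c_n^{-1} Σ_{m=n}^{2n} θ_m`
(`c_n = ((n+1)(3n+1))^{1/2}`), one has, for fixed `j ≥ 0` and `n ≥ j`,
`W_n* v^j W_n = ((3n+1−j)/(3n+1)) u^j`, and consequently
`‖v^j W_n − W_n u^j‖ = O(n^{−1/2})`. -/
theorem stmt10 (H H' : Type*)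
    [NormedAddCommGroup H] [InnerProductSpace ℂ H] [CompleteSpace H]
    [NormedAddCommGroup H'] [InnerProductSpace ℂ H'] [CompleteSpace H']
    (u : H ≃ₗᵢ[ℂ] H) (v : H' ≃ₗᵢ[ℂ] H')
    (ι : ℕ → ℤ → (H →L[ℂ] H'))
    (hiso : ∀ n, ∀ x : H, ‖ι n 0 x‖ = ‖x‖)
    (hrel : ∀ n, ∀ r : ℤ, ∀ x : H, ι n r x = (v ^ r) (ι n 0 ((u ^ (-r)) x)))
    (horth : ∀ (m m' : ℕ) (r r' : ℤ), (m, r) ≠ (m', r') →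
      ∀ x y : H, inner ℂ (ι (2 * m) r x) (ι (2 * m') r' y) = (0 : ℂ)) :
    let c : ℕ → ℝ := fun n => Real.sqrt (((n : ℝ) + 1) * (3 * n + 1))
    let θ : ℕ → (H →L[ℂ] H') := fun m => ∑ r ∈ Finset.Icc (-(m : ℤ)) (m : ℤ), ι (2 * m) r
    let W : ℕ → (H →L[ℂ] H') := fun n => (((c n)⁻¹ : ℝ) : ℂ) • ∑ m ∈ Finset.Icc n (2 * n), θ m
    ∀ j : ℕ,
      (∀ n, j ≤ n → ∀ x y : H,
        (inner ℂ (W n x) ((v ^ (j : ℤ)) (W n y)) : ℂ) =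
          (((3 * (n : ℝ) + 1 - j) / (3 * (n : ℝ) + 1) : ℝ) : ℂ) *
            inner ℂ x ((u ^ (j : ℤ)) y)) ∧
      ∃ C : ℝ, ∀ n : ℕ, j ≤ n →
        ‖((v ^ (j : ℤ)).toLinearIsometry.toContinuousLinearMap).comp (W n) -
            (W n).comp ((u ^ (j : ℤ)).toLinearIsometry.toContinuousLinearMap)‖ ≤
          C / Real.sqrt n :=
  stmt10_general H H' u v ι hiso hrel horth
end
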